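/- Pointwise in κ > 0, as t → ∞ the disc-load Hankel-domain solution converges to the equilibrium: ū(κ,t) → -ρ_i g H₀ R₀ J₁(κR₀)/(κ β(κ)); and the equilibrium displacement u^∞(r) = -ρ_i g H₀ R₀ ∫_0^∞ β(κ)⁻¹ J₁(κR₀) J₀(κr) dκ satisfies, for the case of an effectively infinite disc (i.e. in the limit R₀ → ∞ at r = 0), u^∞(0) → -(ρ_i/ρ_r) H₀ (the compensation depth). -/

import Mathlib

open MeasureTheory Filter

/-- Bessel function of the first kind of order `n`. -/
noncomputable def besselJ (n : ℕ) (s : ℝ) : ℝ :=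
  ∑' k : ℕ, ((-1 : ℝ) ^ k * (s / 2) ^ (2 * k + n)) /
    (Nat.factorial k * Nat.factorial (k + n))

open MeasureTheory Filter

lemma pow_bound (R' : ℝ) (hR' : 1 ≤ R') (x : ℝ) (hx : |x| ≤ R') (n : ℕ) (k : ℕ) :
    ((2*k+n : ℕ) : ℝ) * |x| ^ (2*k+n-1) ≤ (2*R')^n * (4*R'^2)^k := by
  have h1 : ((2*k+n : ℕ) : ℝ) ≤ 2 ^ (2*k+n) := by
    exact_mod_cast (@Nat.lt_two_pow_self (2*k+n)).le
  have h2 : |x| ^ (2*k+n-1) ≤ R' ^ (2*k+n) := by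
    calc |x| ^ (2*k+n-1) ≤ R' ^ (2*k+n-1) := pow_le_pow_left₀ (abs_nonneg x) hx _
    _ ≤ R' ^ (2*k+n) := pow_le_pow_right₀ hR' (Nat.sub_le _ _)
  calc ((2*k+n:ℕ):ℝ) * |x| ^ (2*k+n-1) ≤ 2 ^ (2*k+n) * R' ^ (2*k+n) := by
        apply mul_le_mul h1 h2 (pow_nonneg (abs_nonneg x) _) (by positivity)
  _ = (2*R')^n * (4*R'^2)^k := by
        rw [pow_add, pow_add, pow_mul, pow_mul, mul_pow, mul_pow]
        norm_num; ring

lemma summable_u (C R' : ℝ) : Summable (fun k : ℕ => C * ((4*R'^2)^k / k.factorial)) :=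
  (Real.summable_pow_div_factorial (4*R'^2)).mul_left C

lemma term_bound (a : ℕ → ℝ) (ha : ∀ k, |a k| ≤ 1 / k.factorial) (n : ℕ) (R' : ℝ)
    (hR' : 1 ≤ R') (y : ℝ) (hy : |y| ≤ R') (k : ℕ) :
    ‖a k * (2*k+n) * y ^ (2*k+n-1)‖ ≤ (2*R')^n * ((4*R'^2)^k / k.factorial) := by
  have h0 : ‖a k * (2*k+n) * y ^ (2*k+n-1)‖ = |a k| * (((2*k+n:ℕ):ℝ) * |y| ^ (2*k+n-1)) := by
    push_cast
    rw [Real.norm_eq_abs, abs_mul, abs_mul, abs_pow, mul_assoc]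
    congr 2
    rw [abs_of_nonneg (by positivity)]
  rw [h0]
  calc |a k| * (((2*k+n:ℕ):ℝ) * |y| ^ (2*k+n-1))
      ≤ (1 / k.factorial) * ((2*R')^n * (4*R'^2)^k) := by
        apply mul_le_mul (ha k) (pow_bound R' hR' y hy n k) (by positivity) (by positivity)
    _ = (2*R')^n * ((4*R'^2)^k / k.factorial) := by ring

lemma one_le_absadd (y : ℝ) : 1 ≤ |y| + 1 := by linarith [abs_nonneg y]

lemma summable_main (a : ℕ → ℝ) (ha : ∀ k, |a k| ≤ 1 / k.factorial) (n : ℕ) (y : ℝ) :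
    Summable (fun k => a k * y ^ (2*k+n)) := by
  set R' : ℝ := |y| + 1 with hR'
  have hR'1 : 1 ≤ R' := one_le_absadd y
  have hyR : |y| ≤ R' := by simp [hR']
  apply Summable.of_norm_bounded (summable_u ((2*R')^n) R')
  intro k
  have h2 : |y| ^ (2*k+n) ≤ R' ^ (2*k+n) := pow_le_pow_left₀ (abs_nonneg y) hyR _
  have hR0 : (0:ℝ) < R' := lt_of_lt_of_le one_pos hR'1
  have h3 : R' ^ (2*k+n) ≤ (2*R')^n * (4*R'^2)^k := by
    rw [pow_add, pow_mul]
    calc (R'^2)^k * R'^n ≤ (4*R'^2)^k * (2*R')^n :=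
          mul_le_mul (pow_le_pow_left₀ (sq_nonneg R') (by nlinarith) k)
            (pow_le_pow_left₀ hR0.le (by linarith) n) (pow_nonneg hR0.le n)
            (pow_nonneg (by positivity) k)
      _ = (2*R')^n * (4*R'^2)^k := mul_comm _ _
  calc ‖a k * y ^ (2*k+n)‖ = |a k| * |y| ^ (2*k+n) := by
        rw [Real.norm_eq_abs, abs_mul, abs_pow]
    _ ≤ (1 / k.factorial) * ((2*R')^n * (4*R'^2)^k) :=
        mul_le_mul (ha k) (h2.trans h3) (by positivity) (by positivity)
    _ = (2*R')^n * ((4*R'^2)^k / k.factorial) := by ring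

theorem hasDerivAt_tsum_pow (a : ℕ → ℝ) (ha : ∀ k, |a k| ≤ 1 / k.factorial) (n : ℕ) (x : ℝ) :
    HasDerivAt (fun y : ℝ => ∑' k, a k * y ^ (2*k+n))
      (∑' k, a k * (2*k+n) * x ^ (2*k+n-1)) x := by
  set R' : ℝ := |x| + 1 with hR'
  have hR'1 : 1 ≤ R' := one_le_absadd x
  have hball : ∀ y : ℝ, y ∈ Metric.ball (0:ℝ) R' → |y| ≤ R' := by
    intro y hy
    simpa [Real.dist_eq, abs_sub_comm] using (Metric.mem_ball.1 hy).le
  have hxball : x ∈ Metric.ball (0:ℝ) R' := by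
    rw [Metric.mem_ball, Real.dist_eq, sub_zero, hR']; exact lt_add_one _
  refine hasDerivAt_of_tendstoUniformlyOn (l := (atTop : Filter ℕ)) (Metric.isOpen_ball)
    (f := fun N y => ∑ k ∈ Finset.range N, a k * y ^ (2*k+n))
    (f' := fun N y => ∑ k ∈ Finset.range N, a k * (2*k+n) * y ^ (2*k+n-1))
    (g := fun y : ℝ => ∑' k, a k * y ^ (2*k+n))
    (g' := fun y : ℝ => ∑' k, a k * (2*k+n) * y ^ (2*k+n-1))
    ?_ ?_ ?_ hxball
  · exact tendstoUniformlyOn_tsum_nat (summable_u ((2*R')^n) R')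
      (fun k y hy => term_bound a ha n R' hR'1 y (hball y hy) k)
  · filter_upwards with N y hy
    apply HasDerivAt.fun_sum
    intro k _
    simpa [mul_assoc] using (hasDerivAt_pow (2*k+n) y).const_mul (a k)
  · intro y hy
    exact (summable_main a ha n y).hasSum.tendsto_sum_nat

lemma summable_deriv (a : ℕ → ℝ) (ha : ∀ k, |a k| ≤ 1 / k.factorial) (n : ℕ) (x : ℝ) :
    Summable (fun k => a k * (2*k+n) * x ^ (2*k+n-1)) := by
  set R' : ℝ := |x| + 1 with hR'
  have hR'1 : 1 ≤ R' := one_le_absadd x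
  apply Summable.of_norm_bounded (summable_u ((2*R')^n) R')
  intro k
  exact term_bound a ha n R' hR'1 x (by simp [hR']) k

noncomputable def a0 (k : ℕ) : ℝ := (-1)^k / (4^k * k.factorial * k.factorial)
noncomputable def a1 (k : ℕ) : ℝ := (-1)^k / (2 * 4^k * k.factorial * (k+1).factorial)

lemma ha0 (k : ℕ) : |a0 k| ≤ 1 / k.factorial := by
  have e : |a0 k| = 1 / (4^k * k.factorial * k.factorial) := by
    rw [a0, abs_div, abs_pow, abs_neg, abs_one, one_pow, abs_of_nonneg (by positivity)]
  rw [e]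
  apply one_div_le_one_div_of_le (by positivity)
  have h1 : (1:ℝ) ≤ 4 ^ k := one_le_pow₀ (by norm_num)
  have h2 : (1:ℝ) ≤ (k.factorial : ℝ) := by exact_mod_cast k.factorial_pos
  calc (k.factorial:ℝ) = 1 * 1 * k.factorial := by ring
    _ ≤ 4^k * k.factorial * k.factorial :=
        mul_le_mul (mul_le_mul h1 h2 zero_le_one (by positivity)) le_rfl (by positivity)
          (by positivity)

lemma ha1 (k : ℕ) : |a1 k| ≤ 1 / k.factorial := by
  have e : |a1 k| = 1 / (2 * 4^k * k.factorial * (k+1).factorial) := by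
    rw [a1, abs_div, abs_pow, abs_neg, abs_one, one_pow, abs_of_nonneg (by positivity)]
  rw [e]
  apply one_div_le_one_div_of_le (by positivity)
  have h1 : (1:ℝ) ≤ 4 ^ k := one_le_pow₀ (by norm_num)
  have h2 : (1:ℝ) ≤ (k.factorial : ℝ) := by exact_mod_cast k.factorial_pos
  have h3 : (1:ℝ) ≤ ((k+1).factorial : ℝ) := by exact_mod_cast (k+1).factorial_pos
  have h4 : (1:ℝ) ≤ 2 * 4^k := by nlinarith
  calc (k.factorial:ℝ) = (1 * k.factorial) * 1 := by ring
    _ ≤ ((2*4^k) * k.factorial) * (k+1).factorial :=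
        mul_le_mul (mul_le_mul h4 le_rfl (by positivity) (by positivity)) h3 zero_le_one
          (by positivity)
    _ = 2 * 4^k * k.factorial * (k+1).factorial := by ring

lemma two_pow_twok (k : ℕ) : ((2:ℝ)) ^ (2*k) = 4 ^ k := by
  rw [pow_mul]; norm_num

lemma besselJ0_eq (y : ℝ) : besselJ 0 y = ∑' k, a0 k * y ^ (2*k+0) := by
  rw [besselJ]
  refine tsum_congr fun k => ?_
  simp only [Nat.add_zero]
  rw [a0, div_pow, two_pow_twok]
  field_simp

lemma besselJ1_eq (y : ℝ) : besselJ 1 y = ∑' k, a1 k * y ^ (2*k+1) := by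
  rw [besselJ]
  refine tsum_congr fun k => ?_
  rw [a1, div_pow]
  have : ((2:ℝ)) ^ (2*k+1) = 2 * 4^k := by rw [pow_succ, two_pow_twok]; ring
  rw [this]
  field_simp

lemma mul_besselJ1_eq (y : ℝ) : y * besselJ 1 y = ∑' k, a1 k * y ^ (2*k+2) := by
  rw [besselJ1_eq, ← tsum_mul_left]
  refine tsum_congr fun k => ?_
  rw [pow_succ]
  ring

lemma besselJ0_zero : besselJ 0 0 = 1 := by
  rw [besselJ0_eq]
  rw [tsum_eq_single 0 (by intro k hk; simp [pow_eq_zero_iff, hk])]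
  simp [a0]

lemma besselJ1_zero : besselJ 1 0 = 0 := by
  rw [besselJ1_eq]
  simp

lemma hasDerivAt_besselJ0 (x : ℝ) : HasDerivAt (besselJ 0) (-(besselJ 1 x)) x := by
  have h := hasDerivAt_tsum_pow a0 ha0 0 x
  have he : (fun y : ℝ => ∑' k, a0 k * y ^ (2*k+0)) = besselJ 0 := by
    funext y; rw [besselJ0_eq]
  rw [he] at h
  convert h using 1
  rw [(summable_deriv a0 ha0 0 x).tsum_eq_zero_add]
  have h0 : a0 0 * (2*((0:ℕ):ℝ)+((0:ℕ):ℝ)) * x ^ (2*0+0-1) = 0 := by norm_num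
  rw [h0, zero_add, besselJ1_eq, ← tsum_neg]
  refine tsum_congr fun k => ?_
  have hexp : 2*(k+1)+0-1 = 2*k+1 := by omega
  rw [hexp, a0, a1]
  push_cast [Nat.factorial_succ, pow_succ]
  field_simp
  ring

lemma hasDerivAt_mul_besselJ1 (x : ℝ) :
    HasDerivAt (fun y : ℝ => y * besselJ 1 y) (x * besselJ 0 x) x := by
  have h := hasDerivAt_tsum_pow a1 ha1 2 x
  have he : (fun y : ℝ => ∑' k, a1 k * y ^ (2*k+2)) = fun y : ℝ => y * besselJ 1 y := by
    funext y; rw [mul_besselJ1_eq]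
  rw [he] at h
  convert h using 1
  rw [besselJ0_eq, ← tsum_mul_left]
  refine tsum_congr fun k => ?_
  have hexp : 2*k+2-1 = 2*k+1 := by omega
  rw [hexp, a0, a1]
  push_cast [Nat.factorial_succ, pow_succ]
  field_simp
  ring

lemma hasDerivAt_besselJ1_aux (x : ℝ) : ∃ d, HasDerivAt (besselJ 1) d x := by
  have h := hasDerivAt_tsum_pow a1 ha1 1 x
  have he : (fun y : ℝ => ∑' k, a1 k * y ^ (2*k+1)) = besselJ 1 := by
    funext y; rw [besselJ1_eq]
  rw [he] at h
  exact ⟨_, h⟩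

lemma continuous_besselJ1 : Continuous (besselJ 1) := by
  rw [continuous_iff_continuousAt]
  intro x
  obtain ⟨d, hd⟩ := hasDerivAt_besselJ1_aux x
  exact hd.continuousAt

lemma continuous_besselJ0 : Continuous (besselJ 0) := by
  rw [continuous_iff_continuousAt]
  intro x
  exact (hasDerivAt_besselJ0 x).continuousAt

lemma hasDerivAt_besselJ1 (x : ℝ) (hx : x ≠ 0) :
    HasDerivAt (besselJ 1) (besselJ 0 x - besselJ 1 x / x) x := by
  obtain ⟨d, hd⟩ := hasDerivAt_besselJ1_aux x
  have h2 := (hasDerivAt_id x).mul hd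
  have h3 := hasDerivAt_mul_besselJ1 x
  have : 1 * besselJ 1 x + x * d = x * besselJ 0 x := h2.unique h3
  have hdval : d = besselJ 0 x - besselJ 1 x / x := by
    field_simp
    linarith
  rwa [hdval] at hd

lemma besselJ_sq_add_sq_le_one {x : ℝ} (hx : 0 ≤ x) :
    besselJ 0 x ^ 2 + besselJ 1 x ^ 2 ≤ 1 := by
  set h : ℝ → ℝ := fun y => besselJ 0 y ^ 2 + besselJ 1 y ^ 2 with hh
  have hderiv : ∀ y ∈ Set.Ioi (0:ℝ), HasDerivAt h
      (2 * besselJ 0 y ^ 1 * (-(besselJ 1 y)) +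
        2 * besselJ 1 y ^ 1 * (besselJ 0 y - besselJ 1 y / y)) y := by
    intro y hy
    exact ((hasDerivAt_besselJ0 y).pow 2).add
      ((hasDerivAt_besselJ1 y (ne_of_gt hy)).pow 2)
  have hanti : AntitoneOn h (Set.Ici 0) := by
    apply antitoneOn_of_deriv_nonpos (convex_Ici 0)
    · exact ((continuous_besselJ0.pow 2).add (continuous_besselJ1.pow 2)).continuousOn
    · intro y hy
      rw [interior_Ici] at hy
      exact (hderiv y hy).differentiableAt.differentiableWithinAt
    · intro y hy
      rw [interior_Ici] at hy
      rw [(hderiv y hy).deriv]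
      have hy0 : (0:ℝ) < y := hy
      have : 2 * besselJ 0 y ^ 1 * (-(besselJ 1 y)) +
          2 * besselJ 1 y ^ 1 * (besselJ 0 y - besselJ 1 y / y)
          = -(2 * besselJ 1 y ^ 2 / y) := by
        field_simp
        ring
      rw [this]
      have : 0 ≤ 2 * besselJ 1 y ^ 2 / y := by positivity
      linarith
  have h0 : h 0 = 1 := by
    simp [hh, besselJ0_zero, besselJ1_zero]
  have := hanti Set.self_mem_Ici hx hx
  rw [h0] at this
  exact this

lemma abs_besselJ0_le_one {x : ℝ} (hx : 0 ≤ x) : |besselJ 0 x| ≤ 1 := by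
  have := besselJ_sq_add_sq_le_one hx
  have h2 := sq_nonneg (besselJ 1 x)
  rw [abs_le]
  constructor <;> nlinarith [sq_nonneg (besselJ 0 x)]

lemma abs_besselJ1_le_one {x : ℝ} (hx : 0 ≤ x) : |besselJ 1 x| ≤ 1 := by
  have := besselJ_sq_add_sq_le_one hx
  have h2 := sq_nonneg (besselJ 0 x)
  rw [abs_le]
  constructor <;> nlinarith [sq_nonneg (besselJ 1 x)]

lemma integrableOn_Ioi_of_decay {f : ℝ → ℝ} (hf : Continuous f) (M₁ M₂ : ℝ)
    (h1 : ∀ x ∈ Set.Ioc (0:ℝ) 1, |f x| ≤ M₁)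
    (h2 : ∀ x ∈ Set.Ioi (1:ℝ), |f x| ≤ M₂ / x^2) :
    IntegrableOn f (Set.Ioi (0:ℝ)) := by
  have hsplit : Set.Ioi (0:ℝ) = Set.Ioc 0 1 ∪ Set.Ioi 1 := by
    rw [Set.Ioc_union_Ioi_eq_Ioi zero_le_one]
  rw [hsplit]
  apply IntegrableOn.union
  · apply Integrable.mono' (integrable_const M₁) hf.aestronglyMeasurable.restrict
    filter_upwards [MeasureTheory.ae_restrict_mem measurableSet_Ioc] with x hx
    exact h1 x hx
  · have hg : IntegrableOn (fun x : ℝ => M₂ * x ^ (-2:ℝ)) (Set.Ioi 1) :=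
      (integrableOn_Ioi_rpow_of_lt (by norm_num : (-2:ℝ) < -1) one_pos).const_mul M₂
    apply Integrable.mono' hg hf.aestronglyMeasurable.restrict
    filter_upwards [MeasureTheory.ae_restrict_mem measurableSet_Ioi] with x hx
    have hx0 : (0:ℝ) < x := lt_trans one_pos hx
    have hrn : x ^ (-2:ℝ) = (x^2)⁻¹ := by
      rw [show (-2:ℝ) = -(2:ℕ) by norm_num, Real.rpow_neg hx0.le, Real.rpow_natCast]
    rw [Real.norm_eq_abs, hrn, ← div_eq_mul_inv]
    exact h2 x hx

lemma rat_bound0 {b D : ℝ} (hb : 0 < b) (hD : 0 < D) {c : ℝ} (hc : 0 ≤ c) (l m : ℕ)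
    {x : ℝ} (hx : x ∈ Set.Ioc (0:ℝ) 1) :
    c * x^l / (b + D*x^4)^m ≤ c / b^m := by
  apply div_le_div₀ hc ?_ (by positivity) ?_
  · calc c * x^l ≤ c * 1 :=
        mul_le_mul_of_nonneg_left (pow_le_one₀ hx.1.le hx.2) hc
      _ = c := mul_one c
  · exact pow_le_pow_left₀ hb.le (by nlinarith [pow_nonneg hx.1.le 4, hx.1.le]) m

lemma rat_bound1 {b D : ℝ} (hb : 0 < b) (hD : 0 < D) {c : ℝ} (hc : 0 ≤ c) (l m : ℕ)
    (hlm : l + 2 ≤ 4*m) {x : ℝ} (hx : x ∈ Set.Ioi (1:ℝ)) :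
    c * x^l / (b + D*x^4)^m ≤ (c / D^m) / x^2 := by
  have hx1 : (1:ℝ) ≤ x := le_of_lt hx
  have hx0 : (0:ℝ) < x := lt_of_lt_of_le one_pos hx1
  have hβ : (D*x^4)^m ≤ (b + D*x^4)^m :=
    pow_le_pow_left₀ (by positivity) (by nlinarith) m
  rw [div_le_div_iff₀ (by positivity) (by positivity)]
  calc c * x^l * x^2 = c * x^(l+2) := by rw [pow_add]; ring
    _ ≤ c * x^(4*m) := mul_le_mul_of_nonneg_left (pow_le_pow_right₀ hx1 hlm) hc
    _ = (c / D^m) * (D*x^4)^m := by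
        rw [mul_pow, ← pow_mul]
        field_simp
    _ ≤ (c / D^m) * (b + D*x^4)^m := mul_le_mul_of_nonneg_left hβ (by positivity)

lemma integrable_J_rat {b D : ℝ} (hb : 0 < b) (hD : 0 < D) (J : ℝ → ℝ) (hJc : Continuous J)
    (hJ1 : ∀ x, 0 < x → |J x| ≤ 1) {c : ℝ} (hc : 0 ≤ c) (l m : ℕ) (hlm : l + 2 ≤ 4*m) :
    IntegrableOn (fun x : ℝ => J x * (c * x^l / (b + D*x^4)^m)) (Set.Ioi 0) := by
  have hβ : ∀ x : ℝ, (0:ℝ) < (b + D*x^4)^m := fun x => by positivity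
  have hcont : Continuous (fun x : ℝ => J x * (c * x^l / (b + D*x^4)^m)) := by
    apply hJc.mul
    apply Continuous.div (by continuity) (by continuity)
    exact fun x => (hβ x).ne'
  have habs : ∀ x : ℝ, 0 < x → |J x * (c * x^l / (b + D*x^4)^m)| ≤ c * x^l / (b + D*x^4)^m := by
    intro x hx
    rw [abs_mul, abs_of_nonneg (by positivity : (0:ℝ) ≤ c * x^l / (b + D*x^4)^m)]
    calc |J x| * (c * x^l / (b + D*x^4)^m) ≤ 1 * (c * x^l / (b + D*x^4)^m) :=
        mul_le_mul_of_nonneg_right (hJ1 x hx) (by positivity)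
      _ = _ := one_mul _
  apply integrableOn_Ioi_of_decay hcont (c / b^m) (c / D^m)
  · intro x hx
    exact (habs x hx.1).trans (rat_bound0 hb hD hc l m hx)
  · intro x hx
    have hx0 : (0:ℝ) < x := lt_trans one_pos hx
    exact (habs x hx0).trans (rat_bound1 hb hD hc l m hlm hx)

lemma hasDerivAt_beta (b D : ℝ) (κ : ℝ) :
    HasDerivAt (fun κ : ℝ => b + D*κ^4) (D*(4*κ^3)) κ := by
  have := ((hasDerivAt_pow 4 κ).const_mul D).const_add b
  refine this.congr_deriv ?_
  all_goals (push_cast; ring)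


lemma hasDerivAt_F {b D : ℝ} (hb : 0 < b) (hD : 0 < D) (R₀ : ℝ) (κ : ℝ) :
    HasDerivAt (fun κ : ℝ => besselJ 0 (κ*R₀) / (b + D*κ^4))
      (-(R₀ * ((b + D*κ^4)⁻¹ * besselJ 1 (κ*R₀)))
        - besselJ 0 (κ*R₀) * (4*D*κ^3/(b + D*κ^4)^2)) κ := by
  have hβ : (0:ℝ) < b + D*κ^4 := by positivity
  have hnum : HasDerivAt (fun κ : ℝ => besselJ 0 (κ*R₀)) (-(besselJ 1 (κ*R₀)) * R₀) κ := by
    have := (hasDerivAt_besselJ0 (κ*R₀)).comp κ (hasDerivAt_mul_const R₀)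
    simpa [Function.comp_def] using this
  have := hnum.div (hasDerivAt_beta b D κ) hβ.ne'
  refine this.congr_deriv ?_
  field_simp

lemma hasDerivAt_G {b D : ℝ} (hb : 0 < b) (hD : 0 < D) {R₀ : ℝ} (hR₀ : 0 < R₀) (κ : ℝ) :
    HasDerivAt (fun κ : ℝ => (κ * besselJ 1 (κ*R₀)) * (4*D*κ^2/(b + D*κ^4)^2) / R₀)
      (besselJ 0 (κ*R₀) * (4*D*κ^3/(b + D*κ^4)^2)
        + (besselJ 1 (κ*R₀) * (8*b*D*κ^2/(b + D*κ^4)^3)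
            - besselJ 1 (κ*R₀) * (24*D^2*κ^6/(b + D*κ^4)^3)) / R₀) κ := by
  have hβ : (0:ℝ) < b + D*κ^4 := by positivity
  have hp : HasDerivAt (fun κ : ℝ => κ * besselJ 1 (κ*R₀)) (κ*R₀*besselJ 0 (κ*R₀)) κ := by
    have h1 := (hasDerivAt_mul_besselJ1 (κ*R₀)).comp κ (hasDerivAt_mul_const R₀)
    have h2 := h1.const_mul R₀⁻¹
    have he : (fun x : ℝ => R₀⁻¹ * ((fun y : ℝ => y * besselJ 1 y) ∘ fun x : ℝ => x * R₀) x)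
        = fun x : ℝ => x * besselJ 1 (x*R₀) := by
      funext x
      simp only [Function.comp_apply]
      field_simp
    rw [he] at h2
    refine h2.congr_deriv ?_
    field_simp
    all_goals ring
  have hv : HasDerivAt (fun κ : ℝ => 4*D*κ^2/(b + D*κ^4)^2)
      ((4*D*(2*κ^1) * (b + D*κ^4)^2 - 4*D*κ^2 * (2*(b + D*κ^4)^1*(D*(4*κ^3))))
        / ((b + D*κ^4)^2)^2) κ := by
    have hnum : HasDerivAt (fun κ : ℝ => 4*D*κ^2) (4*D*(2*κ^1)) κ := by
      have := (hasDerivAt_pow 2 κ).const_mul (4*D)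
      refine this.congr_deriv ?_
      all_goals (push_cast; ring)

    have hden : HasDerivAt (fun κ : ℝ => (b + D*κ^4)^2) (2*(b + D*κ^4)^1*(D*(4*κ^3))) κ := by
      have := (hasDerivAt_beta b D κ).pow 2
      refine this.congr_deriv ?_
      all_goals (push_cast; ring)

    exact hnum.div hden (by positivity)
  have := (hp.mul hv).div_const R₀
  refine this.congr_deriv ?_
  field_simp
  ring

section main
variable {b D R₀ : ℝ}

lemma contJ1 (R₀ : ℝ) : Continuous (fun κ : ℝ => besselJ 1 (κ*R₀)) :=
  continuous_besselJ1.comp (continuous_id.mul continuous_const)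

lemma contJ0 (R₀ : ℝ) : Continuous (fun κ : ℝ => besselJ 0 (κ*R₀)) :=
  continuous_besselJ0.comp (continuous_id.mul continuous_const)

lemma absJ1 (hR₀ : 0 < R₀) : ∀ x : ℝ, 0 < x → |besselJ 1 (x*R₀)| ≤ 1 :=
  fun x hx => abs_besselJ1_le_one (by positivity)

lemma absJ0 (hR₀ : 0 < R₀) : ∀ x : ℝ, 0 < x → |besselJ 0 (x*R₀)| ≤ 1 :=
  fun x hx => abs_besselJ0_le_one (by positivity)

lemma int_I1 (hb : 0 < b) (hD : 0 < D) (hR₀ : 0 < R₀) :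
    IntegrableOn (fun κ : ℝ => (b + D*κ^4)⁻¹ * besselJ 1 (κ*R₀)) (Set.Ioi 0) := by
  have h := integrable_J_rat hb hD _ (contJ1 R₀) (absJ1 hR₀)
    (c := 1) (by norm_num) 0 1 (by norm_num)
  apply h.congr_fun ?_ measurableSet_Ioi
  intro x _
  simp [mul_comm]

lemma int_I2 (hb : 0 < b) (hD : 0 < D) (hR₀ : 0 < R₀) :
    IntegrableOn (fun κ : ℝ => besselJ 0 (κ*R₀) * (4*D*κ^3/(b + D*κ^4)^2)) (Set.Ioi 0) :=
  integrable_J_rat hb hD _ (contJ0 R₀) (absJ0 hR₀) (c := 4*D) (by positivity) 3 2 (by norm_num)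

lemma int_E1 (hb : 0 < b) (hD : 0 < D) (hR₀ : 0 < R₀) :
    IntegrableOn (fun κ : ℝ => besselJ 1 (κ*R₀) * (8*b*D*κ^2/(b + D*κ^4)^3)) (Set.Ioi 0) :=
  integrable_J_rat hb hD _ (contJ1 R₀) (absJ1 hR₀) (c := 8*b*D) (by positivity) 2 3 (by norm_num)

lemma int_E2 (hb : 0 < b) (hD : 0 < D) (hR₀ : 0 < R₀) :
    IntegrableOn (fun κ : ℝ => besselJ 1 (κ*R₀) * (24*D^2*κ^6/(b + D*κ^4)^3)) (Set.Ioi 0) :=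
  integrable_J_rat hb hD _ (contJ1 R₀) (absJ1 hR₀) (c := 24*D^2) (by positivity) 6 3 (by norm_num)

lemma int_W1 (hb : 0 < b) (hD : 0 < D) :
    IntegrableOn (fun κ : ℝ => 8*b*D*κ^2/(b + D*κ^4)^3) (Set.Ioi 0) := by
  have h := integrable_J_rat hb hD (fun _ => (1:ℝ)) continuous_const
    (fun x _ => by norm_num) (c := 8*b*D) (by positivity) 2 3 (by norm_num)
  simpa using h

lemma int_W2 (hb : 0 < b) (hD : 0 < D) :
    IntegrableOn (fun κ : ℝ => 24*D^2*κ^6/(b + D*κ^4)^3) (Set.Ioi 0) := by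
  have h := integrable_J_rat hb hD (fun _ => (1:ℝ)) continuous_const
    (fun x _ => by norm_num) (c := 24*D^2) (by positivity) 6 3 (by norm_num)
  simpa using h

end main

lemma tendsto_beta_inv {b D : ℝ} (hb : 0 < b) (hD : 0 < D) :
    Tendsto (fun κ : ℝ => (b + D*κ^4)⁻¹) atTop (nhds 0) := by
  apply Tendsto.inv_tendsto_atTop
  apply tendsto_atTop_add_const_left
  exact (tendsto_pow_atTop (by norm_num : (4:ℕ) ≠ 0)).const_mul_atTop hD

lemma tendsto_F {b D : ℝ} (hb : 0 < b) (hD : 0 < D) {R₀ : ℝ} (hR₀ : 0 < R₀) :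
    Tendsto (fun κ : ℝ => besselJ 0 (κ*R₀) / (b + D*κ^4)) atTop (nhds 0) := by
  apply squeeze_zero_norm' ?_ (tendsto_beta_inv hb hD)
  filter_upwards [eventually_ge_atTop (0:ℝ)] with κ hκ
  have hβ : (0:ℝ) < b + D*κ^4 := by positivity
  rw [Real.norm_eq_abs, abs_div, abs_of_pos hβ, ← one_div]
  exact div_le_div₀ (by norm_num) (abs_besselJ0_le_one (by positivity)) hβ le_rfl

set_option maxHeartbeats 1000000 in
lemma tendsto_G {b D : ℝ} (hb : 0 < b) (hD : 0 < D) {R₀ : ℝ} (hR₀ : 0 < R₀) :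
    Tendsto (fun κ : ℝ => (κ * besselJ 1 (κ*R₀)) * (4*D*κ^2/(b + D*κ^4)^2) / R₀)
      atTop (nhds 0) := by
  have hlim : Tendsto (fun κ : ℝ => (4*D/D^2)/R₀ * (κ^2)⁻¹) atTop (nhds 0) := by
    have h1 : Tendsto (fun κ : ℝ => (κ^2)⁻¹) atTop (nhds 0) :=
      (tendsto_pow_atTop (by norm_num : (2:ℕ) ≠ 0)).inv_tendsto_atTop
    have := h1.const_mul ((4*D/D^2)/R₀)
    simpa using this
  apply squeeze_zero_norm' ?_ hlim
  filter_upwards [eventually_gt_atTop (1:ℝ)] with κ hκ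
  have hκ0 : (0:ℝ) < κ := lt_trans one_pos hκ
  have hβ : (0:ℝ) < b + D*κ^4 := by positivity
  have habs : ‖(κ * besselJ 1 (κ*R₀)) * (4*D*κ^2/(b + D*κ^4)^2) / R₀‖
      = κ * |besselJ 1 (κ*R₀)| * (4*D*κ^2/(b + D*κ^4)^2) / R₀ := by
    rw [Real.norm_eq_abs, abs_div, abs_of_pos hR₀, abs_mul, abs_mul,
      abs_of_pos hκ0, abs_of_pos (by positivity : (0:ℝ) < 4*D*κ^2/(b + D*κ^4)^2)]
  rw [habs]
  have h2 : 4*D*κ^3/(b + D*κ^4)^2 ≤ (4*D/D^2)/κ^2 :=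
    rat_bound1 hb hD (by positivity) 3 2 (by norm_num) hκ
  calc κ * |besselJ 1 (κ*R₀)| * (4*D*κ^2/(b + D*κ^4)^2) / R₀
      ≤ κ * 1 * (4*D*κ^2/(b + D*κ^4)^2) / R₀ := by
        gcongr
        exact abs_besselJ1_le_one (by positivity)
    _ = (4*D*κ^3/(b + D*κ^4)^2) / R₀ := by
        rw [mul_one]
        congr 1
        field_simp
    _ ≤ ((4*D/D^2)/κ^2) / R₀ := by gcongr
    _ = (4*D/D^2)/R₀ * (κ^2)⁻¹ := by
        field_simp

lemma ibp1 {b D : ℝ} (hb : 0 < b) (hD : 0 < D) {R₀ : ℝ} (hR₀ : 0 < R₀) :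
    R₀ * ∫ κ in Set.Ioi (0:ℝ), (b + D*κ^4)⁻¹ * besselJ 1 (κ*R₀)
      = 1/b - ∫ κ in Set.Ioi (0:ℝ), besselJ 0 (κ*R₀) * (4*D*κ^3/(b + D*κ^4)^2) := by
  have hcontF : Continuous (fun κ : ℝ => besselJ 0 (κ*R₀) / (b + D*κ^4)) := by
    apply (contJ0 R₀).div (by continuity)
    intro κ
    positivity
  have hint : IntegrableOn
      (fun κ : ℝ => -(R₀ * ((b + D*κ^4)⁻¹ * besselJ 1 (κ*R₀)))
        - besselJ 0 (κ*R₀) * (4*D*κ^3/(b + D*κ^4)^2)) (Set.Ioi 0) :=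
    (((int_I1 hb hD hR₀).const_mul R₀).neg).sub (int_I2 hb hD hR₀)
  have key := integral_Ioi_of_hasDerivAt_of_tendsto (a := 0) (m := 0)
    hcontF.continuousWithinAt (fun κ _ => hasDerivAt_F hb hD R₀ κ) hint (tendsto_F hb hD hR₀)
  have hA : IntegrableOn (fun κ : ℝ => -(R₀ * ((b + D*κ^4)⁻¹ * besselJ 1 (κ*R₀))))
      (Set.Ioi 0) := ((int_I1 hb hD hR₀).const_mul R₀).neg
  rw [integral_sub hA (int_I2 hb hD hR₀), integral_neg, integral_const_mul] at key
  have hF0 : besselJ 0 (0*R₀) / (b + D*(0:ℝ)^4) = 1/b := by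
    norm_num [besselJ0_zero]
  rw [hF0] at key
  linarith

lemma ibp2 {b D : ℝ} (hb : 0 < b) (hD : 0 < D) {R₀ : ℝ} (hR₀ : 0 < R₀) :
    (∫ κ in Set.Ioi (0:ℝ), besselJ 0 (κ*R₀) * (4*D*κ^3/(b + D*κ^4)^2))
      + ((∫ κ in Set.Ioi (0:ℝ), besselJ 1 (κ*R₀) * (8*b*D*κ^2/(b + D*κ^4)^3))
          - ∫ κ in Set.Ioi (0:ℝ), besselJ 1 (κ*R₀) * (24*D^2*κ^6/(b + D*κ^4)^3)) / R₀
      = 0 := by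
  have hcontG : Continuous
      (fun κ : ℝ => (κ * besselJ 1 (κ*R₀)) * (4*D*κ^2/(b + D*κ^4)^2) / R₀) := by
    apply Continuous.div_const
    apply Continuous.mul (continuous_id.mul (contJ1 R₀))
    apply Continuous.div (by continuity) (by continuity)
    intro κ
    positivity
  have hint : IntegrableOn
      (fun κ : ℝ => besselJ 0 (κ*R₀) * (4*D*κ^3/(b + D*κ^4)^2)
        + (besselJ 1 (κ*R₀) * (8*b*D*κ^2/(b + D*κ^4)^3)
            - besselJ 1 (κ*R₀) * (24*D^2*κ^6/(b + D*κ^4)^3)) / R₀) (Set.Ioi 0) :=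
    (int_I2 hb hD hR₀).add (((int_E1 hb hD hR₀).sub (int_E2 hb hD hR₀)).div_const R₀)
  have key := integral_Ioi_of_hasDerivAt_of_tendsto (a := 0) (m := 0)
    hcontG.continuousWithinAt (fun κ _ => hasDerivAt_G hb hD hR₀ κ) hint (tendsto_G hb hD hR₀)
  have hE : IntegrableOn (fun κ : ℝ => (besselJ 1 (κ*R₀) * (8*b*D*κ^2/(b + D*κ^4)^3)
      - besselJ 1 (κ*R₀) * (24*D^2*κ^6/(b + D*κ^4)^3)) / R₀) (Set.Ioi 0) :=
    (((int_E1 hb hD hR₀).sub (int_E2 hb hD hR₀)).div_const R₀)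
  have hS : IntegrableOn (fun κ : ℝ => besselJ 1 (κ*R₀) * (8*b*D*κ^2/(b + D*κ^4)^3)
      - besselJ 1 (κ*R₀) * (24*D^2*κ^6/(b + D*κ^4)^3)) (Set.Ioi 0) :=
    (int_E1 hb hD hR₀).sub (int_E2 hb hD hR₀)
  rw [integral_add (int_I2 hb hD hR₀) hE, integral_div,
    integral_sub (int_E1 hb hD hR₀) (int_E2 hb hD hR₀)] at key
  have hG0 : (0:ℝ) * besselJ 1 (0*R₀) * (4*D*(0:ℝ)^2/(b + D*(0:ℝ)^4)^2) / R₀ = 0 := by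
    norm_num
  rw [hG0] at key
  linarith

lemma est {b D : ℝ} (hb : 0 < b) (hD : 0 < D) {R₀ : ℝ} (hR₀ : 0 < R₀) :
    |R₀ * (∫ κ in Set.Ioi (0:ℝ), (b + D*κ^4)⁻¹ * besselJ 1 (κ*R₀)) - 1/b|
      ≤ ((∫ κ in Set.Ioi (0:ℝ), 8*b*D*κ^2/(b + D*κ^4)^3)
          + ∫ κ in Set.Ioi (0:ℝ), 24*D^2*κ^6/(b + D*κ^4)^3) / R₀ := by
  have hE1 : ‖∫ κ in Set.Ioi (0:ℝ), besselJ 1 (κ*R₀) * (8*b*D*κ^2/(b + D*κ^4)^3)‖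
      ≤ ∫ κ in Set.Ioi (0:ℝ), 8*b*D*κ^2/(b + D*κ^4)^3 := by
    apply norm_integral_le_of_norm_le (int_W1 hb hD)
    filter_upwards [MeasureTheory.ae_restrict_mem measurableSet_Ioi] with x hx
    have hx0 : (0:ℝ) < x := hx
    rw [Real.norm_eq_abs, abs_mul, abs_of_nonneg (by positivity : (0:ℝ) ≤ 8*b*D*x^2/(b + D*x^4)^3)]
    calc |besselJ 1 (x*R₀)| * (8*b*D*x^2/(b + D*x^4)^3)
        ≤ 1 * (8*b*D*x^2/(b + D*x^4)^3) :=
          mul_le_mul_of_nonneg_right (abs_besselJ1_le_one (by positivity)) (by positivity)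
      _ = _ := one_mul _
  have hE2 : ‖∫ κ in Set.Ioi (0:ℝ), besselJ 1 (κ*R₀) * (24*D^2*κ^6/(b + D*κ^4)^3)‖
      ≤ ∫ κ in Set.Ioi (0:ℝ), 24*D^2*κ^6/(b + D*κ^4)^3 := by
    apply norm_integral_le_of_norm_le (int_W2 hb hD)
    filter_upwards [MeasureTheory.ae_restrict_mem measurableSet_Ioi] with x hx
    have hx0 : (0:ℝ) < x := hx
    rw [Real.norm_eq_abs, abs_mul,
      abs_of_nonneg (by positivity : (0:ℝ) ≤ 24*D^2*x^6/(b + D*x^4)^3)]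
    calc |besselJ 1 (x*R₀)| * (24*D^2*x^6/(b + D*x^4)^3)
        ≤ 1 * (24*D^2*x^6/(b + D*x^4)^3) :=
          mul_le_mul_of_nonneg_right (abs_besselJ1_le_one (by positivity)) (by positivity)
      _ = _ := one_mul _
  rw [ibp1 hb hD hR₀]
  have heq : 1/b - (∫ κ in Set.Ioi (0:ℝ), besselJ 0 (κ*R₀) * (4*D*κ^3/(b + D*κ^4)^2)) - 1/b
      = -((((∫ κ in Set.Ioi (0:ℝ), besselJ 1 (κ*R₀) * (8*b*D*κ^2/(b + D*κ^4)^3))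
          - ∫ κ in Set.Ioi (0:ℝ), besselJ 1 (κ*R₀) * (24*D^2*κ^6/(b + D*κ^4)^3)) / R₀)) * (-1) := by
    have h2 := ibp2 hb hD hR₀
    linarith
  rw [heq]
  rw [abs_mul, abs_neg, abs_neg, abs_one, mul_one, abs_div, abs_of_pos hR₀]
  gcongr
  calc |(∫ κ in Set.Ioi (0:ℝ), besselJ 1 (κ*R₀) * (8*b*D*κ^2/(b + D*κ^4)^3))
        - ∫ κ in Set.Ioi (0:ℝ), besselJ 1 (κ*R₀) * (24*D^2*κ^6/(b + D*κ^4)^3)|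
      ≤ |∫ κ in Set.Ioi (0:ℝ), besselJ 1 (κ*R₀) * (8*b*D*κ^2/(b + D*κ^4)^3)|
        + |∫ κ in Set.Ioi (0:ℝ), besselJ 1 (κ*R₀) * (24*D^2*κ^6/(b + D*κ^4)^3)| := abs_sub _ _
    _ ≤ _ := by
        rw [Real.norm_eq_abs] at hE1 hE2
        exact add_le_add hE1 hE2

lemma tendsto_main {b D : ℝ} (hb : 0 < b) (hD : 0 < D) :
    Tendsto (fun R₀ : ℝ => R₀ * ∫ κ in Set.Ioi (0:ℝ), (b + D*κ^4)⁻¹ * besselJ 1 (κ*R₀))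
      atTop (nhds (1/b)) := by
  rw [← tendsto_sub_nhds_zero_iff]
  set C := (∫ κ in Set.Ioi (0:ℝ), 8*b*D*κ^2/(b + D*κ^4)^3)
    + ∫ κ in Set.Ioi (0:ℝ), 24*D^2*κ^6/(b + D*κ^4)^3 with hC
  have hlim : Tendsto (fun R₀ : ℝ => C / R₀) atTop (nhds 0) := by
    have h1 : Tendsto (fun R₀ : ℝ => R₀⁻¹) atTop (nhds 0) := tendsto_inv_atTop_zero
    have := h1.const_mul C
    simpa [div_eq_mul_inv] using this
  apply squeeze_zero_norm' ?_ hlim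
  filter_upwards [eventually_gt_atTop (0:ℝ)] with R₀ hR₀
  rw [Real.norm_eq_abs]
  exact est hb hD hR₀

/-- For the held disc load: (a) pointwise in `κ > 0`, the Hankel-domain solution tends
as `t → ∞` to the equilibrium `-ρ_i g H₀ R₀ J₁(κR₀)/(κ β(κ))`; (b) the equilibrium
central displacement tends to the compensation depth `-(ρ_i/ρ_r) H₀` as `R₀ → ∞`. -/
theorem disc_load_equilibrium_and_compensation
    (ρi ρr g H₀ η D : ℝ)
    (hρi : 0 < ρi) (hρr : 0 < ρr) (hg : 0 < g) (hH₀ : 0 < H₀) (hη : 0 < η) (hD : 0 < D) :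
    (∀ R₀ > (0 : ℝ), ∀ κ > (0 : ℝ),
      Tendsto
        (fun t : ℝ => ρi * g * H₀ * R₀ *
          (Real.exp (-(ρr * g + D * κ ^ 4) * t / (2 * η * κ)) - 1) *
            besselJ 1 (κ * R₀) / (κ * (ρr * g + D * κ ^ 4)))
        atTop
        (nhds (-(ρi * g * H₀ * R₀) * besselJ 1 (κ * R₀) / (κ * (ρr * g + D * κ ^ 4))))) ∧
    Tendsto
      (fun R₀ : ℝ => -(ρi * g * H₀ * R₀) *
        ∫ κ in Set.Ioi (0 : ℝ), (ρr * g + D * κ ^ 4)⁻¹ * besselJ 1 (κ * R₀))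
      atTop
      (nhds (-(ρi / ρr) * H₀)) := by
  constructor
  · intro R₀ hR₀ κ hκ
    have hβ : (0:ℝ) < ρr * g + D * κ ^ 4 := by positivity
    have hc : -(ρr * g + D * κ ^ 4) / (2 * η * κ) < 0 := by
      apply div_neg_of_neg_of_pos (by linarith) (by positivity)
    have h0 : Tendsto (fun t : ℝ => -(ρr * g + D * κ ^ 4) / (2 * η * κ) * t) atTop atBot :=
      Tendsto.const_mul_atTop_of_neg hc tendsto_id
    have h1 : Tendsto (fun t : ℝ => -(ρr * g + D * κ ^ 4) * t / (2 * η * κ)) atTop atBot :=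
      h0.congr (fun t => by ring)
    have hexp : Tendsto (fun t : ℝ => Real.exp (-(ρr * g + D * κ ^ 4) * t / (2 * η * κ)))
        atTop (nhds 0) := Real.tendsto_exp_atBot.comp h1
    have h2 := (((hexp.sub_const 1).const_mul (ρi * g * H₀ * R₀)).mul_const
      (besselJ 1 (κ * R₀))).div_const (κ * (ρr * g + D * κ ^ 4))
    have hval : -(ρi * g * H₀ * R₀) * besselJ 1 (κ * R₀) / (κ * (ρr * g + D * κ ^ 4))
        = ρi * g * H₀ * R₀ * (0 - 1) * besselJ 1 (κ * R₀) / (κ * (ρr * g + D * κ ^ 4)) := by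
      ring
    rw [hval]
    exact h2
  · have hb : (0:ℝ) < ρr * g := by positivity
    have h := tendsto_main hb hD
    have heq : (fun R₀ : ℝ => -(ρi * g * H₀ * R₀) *
        ∫ κ in Set.Ioi (0 : ℝ), (ρr * g + D * κ ^ 4)⁻¹ * besselJ 1 (κ * R₀))
        = fun R₀ : ℝ => (-(ρi * g * H₀)) *
          (R₀ * ∫ κ in Set.Ioi (0 : ℝ), (ρr * g + D * κ ^ 4)⁻¹ * besselJ 1 (κ * R₀)) := by
      funext R₀
      ring
    rw [heq]
    have h2 := h.const_mul (-(ρi * g * H₀))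
    have hval : -(ρi / ρr) * H₀ = -(ρi * g * H₀) * (1 / (ρr * g)) := by
      field_simp
    rw [hval]
    exact h2
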